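/- arXiv:math/0306148 — 3 statements merged into one kernel-verified Lean document; each statement's English description precedes it below -/
import Mathlib

section
/- Let R be a commutative ring, let L and W be ideals of R, let M be an ideal of R, and let x ∈ M. Assume L : x² = L : x, xW = (0), and L : x = L : M. Then for every integer n ≥ 2, (L + (xⁿ) + W) : M = (L + (xⁿ)) : M. -/
open Ideal IsLocalRing

/-- A sequence `x₁, …, x_s` is a `d`-sequence. -/
def IsDSeq {R : Type*} [CommRing R] {s : ℕ} (x : Fin s → R) : Prop :=
  ∀ i j : Fin s, i ≤ j →
    (Ideal.span (x '' {k | k < i})).colon (Ideal.span {x i}) =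
    (Ideal.span (x '' {k | k < i})).colon (Ideal.span {x i * x j})

/-- A strong `d`-sequence: all power sequences are `d`-sequences. -/
def IsStrongDSeq {R : Type*} [CommRing R] {s : ℕ} (x : Fin s → R) : Prop :=
  ∀ n : Fin s → ℕ, (∀ i, 1 ≤ n i) → IsDSeq (fun i => x i ^ n i)

/-- `x₁, …, x_d` is a system of parameters of the local ring `A`. -/
def IsSOP {A : Type*} [CommRing A] [IsLocalRing A] {d : ℕ} (x : Fin d → A) : Prop :=
  ringKrullDim A = d ∧ (Ideal.span (Set.range x)).radical = maximalIdeal A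

/-- `Q` is a parameter ideal: generated by a system of parameters. -/
def IsParameterIdeal (A : Type*) [CommRing A] [IsLocalRing A] (Q : Ideal A) : Prop :=
  ∃ (d : ℕ) (x : Fin d → A), IsSOP x ∧ Q = Ideal.span (Set.range x)

/-- A Buchsbaum local ring: every system of parameters is a weak `A`-sequence. -/
def IsBuchsbaum (A : Type*) [CommRing A] [IsLocalRing A] : Prop :=
  ∀ (d : ℕ) (x : Fin d → A), IsSOP x →
    ∀ i : Fin d,
      (Ideal.span (x '' {k | k < i})).colon (Ideal.span {x i}) =
      (Ideal.span (x '' {k | k < i})).colon (maximalIdeal A)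

/-- The 0-th local cohomology `H⁰_𝔪(A)`, as the ideal of elements killed by a power of `𝔪`. -/
noncomputable def H0 (A : Type*) [CommRing A] [IsLocalRing A] : Ideal A :=
  ⨆ n : ℕ, (⊥ : Ideal A).colon (((maximalIdeal A) ^ n : Ideal A) : Set A)

/-- The length of a module, as the Krull dimension of its submodule lattice (valued in `ℕ∞`). -/
noncomputable def moduleLength (R M : Type*) [Ring R] [AddCommGroup M] [Module R M] : ℕ∞ :=
  WithBot.unbotD 0 (Order.krullDim (Submodule R M))

/-- `ℓ_A(I/Q)`: the length of `I/Q`. -/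
noncomputable def quotLength {A : Type*} [CommRing A] (Q I : Ideal A) : ℕ∞ :=
  moduleLength (A ⧸ Q) (I.map (Ideal.Quotient.mk Q))

/-- `r(A)`: the supremum of the indices of reducibility of parameter ideals. -/
noncomputable def typeR (A : Type*) [CommRing A] [IsLocalRing A] : ℕ∞ :=
  ⨆ Q ∈ {Q : Ideal A | IsParameterIdeal A Q}, quotLength Q (Q.colon (maximalIdeal A))

/-- The reduction number `r_Q(I) = min{n ≥ 0 ∣ I^{n+1} = Q Iⁿ}`. -/
noncomputable def reductionNumber {A : Type*} [CommRing A] (Q I : Ideal A) : ℕ :=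
  sInf {n : ℕ | I ^ (n + 1) = Q * I ^ n}

/-- `x` is integral over the ideal `Q`. -/
def IsIntegralOverIdeal {A : Type*} [CommRing A] (Q : Ideal A) (x : A) : Prop :=
  ∃ n : ℕ, 0 < n ∧ ∃ c : ℕ → A, (∀ i ∈ Finset.Icc 1 n, c i ∈ Q ^ i) ∧
    x ^ n + ∑ i ∈ Finset.Icc 1 n, c i * x ^ (n - i) = 0

/-- `A` has Hilbert–Samuel multiplicity `e` (with respect to its maximal ideal). -/
def HasHSMultiplicity (A : Type*) [CommRing A] [IsLocalRing A] (e : ℕ) : Prop :=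
  ∃ d : ℕ, ringKrullDim A = d ∧
    Filter.Tendsto
      (fun n : ℕ =>
        ((d.factorial : ℝ) * ((moduleLength A (A ⧸ (maximalIdeal A) ^ n)).toNat : ℝ)) / (n : ℝ) ^ d)
      Filter.atTop (nhds (e : ℝ))

/-- The local ring `A` has depth `n`. -/
def HasDepth (A : Type*) [CommRing A] [IsLocalRing A] (n : ℕ) : Prop :=
  (∃ rs : List A, rs.length = n ∧ (∀ a ∈ rs, a ∈ maximalIdeal A) ∧
      RingTheory.Sequence.IsRegular A rs) ∧
    ∀ rs : List A, (∀ a ∈ rs, a ∈ maximalIdeal A) → RingTheory.Sequence.IsRegular A rs →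
      rs.length ≤ n

/-!
Multiplication by `x` kills `W`, so it maps `L + (xⁿ) + W` into `L + (xⁿ⁺¹)`, and the hypothesis
`L : x² = L : x` propagates to `L : xʲ = L : x` for all `j ≥ 1`. Hence for `r` in the left-hand side,
`r x² ∈ L + (xⁿ⁺¹)` gives `r ≡ a xⁿ⁻¹` modulo `L : x = L : M`. For `m ∈ M` the same argument applied to
`a m xⁿ ∈ L + (xⁿ⁺¹)` gives `a m ≡ c x` modulo `L : x`, and since `n ≥ 2` the factor `xⁿ⁻¹` absorbs
one `x`: `a m xⁿ⁻¹ ∈ L + (xⁿ)`.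
-/

namespace Ideal

variable {R : Type*} [CommRing R] {L : Ideal R} {x : R}

theorem colon_span_pow_succ_eq_of_colon_span_sq_eq
    (h : L.colon (span {x ^ 2}) = L.colon (span {x})) (j : ℕ) :
    L.colon (span {x ^ (j + 1)}) = L.colon (span {x}) := by
  have hsq : ∀ r, r * x ^ 2 ∈ L ↔ r * x ∈ L := fun r => by
    simpa only [mem_colon_span_singleton] using SetLike.ext_iff.mp h r
  induction j with
  | zero => rw [zero_add, pow_one]
  | succ j ih =>
    ext r
    rw [← ih, mem_colon_span_singleton, mem_colon_span_singleton,
      show r * x ^ (j + 1 + 1) = r * x ^ j * x ^ 2 by ring, hsq, mul_assoc, ← pow_succ]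

theorem exists_sub_mul_pow_mem_colon_of_colon_span_sq_eq
    (h : L.colon (span {x ^ 2}) = L.colon (span {x})) {z : R} (j k : ℕ)
    (hz : z * x ^ (j + 1) ∈ L ⊔ span {x ^ (k + j + 1)}) :
    ∃ a, z - a * x ^ k ∈ L.colon (span {x}) := by
  obtain ⟨l, hl, u, hu, hla⟩ := Submodule.mem_sup.mp hz
  obtain ⟨a, rfl⟩ := mem_span_singleton'.mp hu
  refine ⟨a, ?_⟩
  rw [← colon_span_pow_succ_eq_of_colon_span_sq_eq h j, mem_colon_span_singleton]
  convert hl using 1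
  linear_combination hla.symm

theorem mul_pow_succ_mem_sup_span_of_colon_span_sq_eq
    (h : L.colon (span {x ^ 2}) = L.colon (span {x})) {b : R} (k : ℕ)
    (hb : b * x ^ (k + 2) ∈ L ⊔ span {x ^ (k + 3)}) :
    b * x ^ (k + 1) ∈ L ⊔ span {x ^ (k + 2)} := by
  obtain ⟨c, hc⟩ := exists_sub_mul_pow_mem_colon_of_colon_span_sq_eq h (k + 1) 1
    (by rwa [show 1 + (k + 1) + 1 = k + 3 by ring])
  rw [mem_colon_span_singleton, pow_one] at hc
  rw [show b * x ^ (k + 1) = (b - c * x) * x * x ^ k + c * x ^ (k + 2) by ring]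
  exact add_mem (mem_sup_left (L.mul_mem_right _ hc))
    (mem_sup_right (mem_span_singleton'.mpr ⟨c, rfl⟩))

theorem mul_mem_sup_span_pow_succ_of_mul_eq_zero {W : Ideal R} (hxW : ∀ w ∈ W, x * w = 0)
    {n : ℕ} {y : R} (hy : y ∈ L ⊔ span {x ^ n} ⊔ W) :
    x * y ∈ L ⊔ span {x ^ (n + 1)} := by
  obtain ⟨_, hlu, w, hw, rfl⟩ := Submodule.mem_sup.mp hy
  obtain ⟨l, hl, u, hu, rfl⟩ := Submodule.mem_sup.mp hlu
  obtain ⟨a, rfl⟩ := mem_span_singleton'.mp hu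
  rw [mul_add, hxW w hw, add_zero, mul_add,
    show x * (a * x ^ n) = a * x ^ (n + 1) by ring]
  exact add_mem (mem_sup_left (L.mul_mem_left x hl))
    (mem_sup_right (mem_span_singleton'.mpr ⟨a, rfl⟩))

end Ideal

theorem stmt1 {R : Type*} [CommRing R] (L W M : Ideal R) (x : R) (hx : x ∈ M)
    (hcolon : L.colon (Ideal.span {x ^ 2}) = L.colon (Ideal.span {x}))
    (hxW : ∀ w ∈ W, x * w = 0)
    (hLM : L.colon (Ideal.span {x}) = L.colon M) (n : ℕ) (hn : 2 ≤ n) :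
    (L + Ideal.span {x ^ n} + W).colon M = (L + Ideal.span {x ^ n}).colon M := by
  obtain ⟨k, rfl⟩ : ∃ k, n = k + 2 := ⟨n - 2, by omega⟩
  simp only [Ideal.add_eq_sup]
  refine le_antisymm (fun r hr => ?_) (Submodule.colon_mono le_sup_left subset_rfl)
  have hrM : ∀ m ∈ M, r * m ∈ L ⊔ span {x ^ (k + 2)} ⊔ W := Submodule.mem_colon.mp hr
  obtain ⟨a, hs⟩ := exists_sub_mul_pow_mem_colon_of_colon_span_sq_eq hcolon 1 (k + 1)
    (by simpa only [mul_comm x, mul_assoc, ← pow_two] using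
      mul_mem_sup_span_pow_succ_of_mul_eq_zero hxW (hrM x hx))
  rw [hLM] at hs
  refine Submodule.mem_colon.mpr fun m hm => ?_
  have hsm : (r - a * x ^ (k + 1)) * m ∈ L := Submodule.mem_colon.mp hs m hm
  have ham : a * m * x ^ (k + 2) ∈ L ⊔ span {x ^ (k + 3)} := by
    convert sub_mem (mul_mem_sup_span_pow_succ_of_mul_eq_zero hxW (hrM m hm))
      (mem_sup_left (L.mul_mem_left x hsm)) using 1
    ring
  convert add_mem (mem_sup_left hsm) (mul_pow_succ_mem_sup_span_of_colon_span_sq_eq hcolon k ham)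
    using 1
  simp only [smul_eq_mul]
  ring
end

section
/- Let (A, 𝔪) be a Buchsbaum local ring of dimension d ≥ 2 and let a ∈ 𝔪 with dim A/(a) = d − 1. Then r(A/(a)) ≤ r(A), where for a Buchsbaum local ring B, r(B) = sup over parameter ideals Q of B of the length of (Q : 𝔪_B)/Q. -/
open Ideal IsLocalRing

/-!
Pulling a parameter ideal `Q'` of `A ⧸ (a)` back along the quotient map gives
`Q = (a, x₁, …, x_{d-1})` for lifts `xᵢ` of the generators of `Q'`. Because
`dim A = dim A ⧸ (a) + 1`, these `d` elements form a system of parameters of `A`. Moreover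
`A ⧸ Q ≅ (A ⧸ (a)) ⧸ Q'`, and under this isomorphism `(Q : 𝔪) / Q` corresponds to
`(Q' : 𝔪') / Q'`. So every index of reducibility of `A ⧸ (a)` is also one of `A`.
-/

section

variable {R S : Type*} [CommRing R] [CommRing S]

theorem moduleLength_map_ringEquiv (e : R ≃+* S) (K : Ideal R) :
    moduleLength S (K.map e) = moduleLength R K := by
  have hK : K.map e = Submodule.map (e.toSemilinearEquiv : R →ₛₗ[(e : R →+* S)] S) K :=
    Submodule.ext fun _ => by simp [mem_map_of_equiv]
  have := RingHomInvPair.of_ringEquiv e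
  have := RingHomInvPair.of_ringEquiv_symm e
  rw [hK, moduleLength, moduleLength,
    Order.krullDim_eq_of_orderIso (Submodule.orderIsoMapComap (e.toSemilinearEquiv.submoduleMap K))]

theorem quotLength_map_quotientMk_of_le {J Q : Ideal R} (hJQ : J ≤ Q) (I : Ideal R) :
    quotLength (Q.map (Ideal.Quotient.mk J)) (I.map (Ideal.Quotient.mk J)) = quotLength Q I := by
  rw [quotLength, quotLength, ← moduleLength_map_ringEquiv (DoubleQuot.quotQuotEquivQuotOfLE hJQ),
    Ideal.map_map, ← map_coe, Ideal.map_map]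
  rfl

theorem Ideal.comap_colon_of_surjective {f : R →+* S} (hf : Function.Surjective f)
    (I J : Ideal S) :
    (I.colon J).comap f = (I.comap f).colon (J.comap f) := by
  ext r
  simp only [mem_comap, Submodule.mem_colon, SetLike.mem_coe, smul_eq_mul, map_mul]
  exact ⟨fun h s hs => h _ hs, fun h s hs => by obtain ⟨s, rfl⟩ := hf s; exact h s hs⟩

theorem Ideal.comap_quotientMk_span_image (a : R) (s : Set R) :
    (span (Ideal.Quotient.mk (span {a}) '' s)).comap (Ideal.Quotient.mk _) = span (insert a s) := by
  rw [← Ideal.map_span, comap_map_of_surjective' _ Quotient.mk_surjective, mk_ker,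
    span_insert, sup_comm]

end

section

variable {A : Type*} [CommRing A] [IsLocalRing A]

theorem le_typeR {Q : Ideal A} (hQ : IsParameterIdeal A Q) :
    quotLength Q (Q.colon (maximalIdeal A)) ≤ typeR A :=
  le_iSup₂ (f := fun Q (_ : Q ∈ {Q : Ideal A | IsParameterIdeal A Q}) =>
    quotLength Q (Q.colon (maximalIdeal A))) Q hQ

theorem maximalIdeal_comap_quotientMk (J : Ideal A) [IsLocalRing (A ⧸ J)] :
    (maximalIdeal (A ⧸ J)).comap (Ideal.Quotient.mk J) = maximalIdeal A :=
  have := IsLocalHom.of_surjective _ (Ideal.Quotient.mk_surjective (I := J))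
  maximalIdeal_comap _

theorem quotLength_comap_quotientMk_colon_maximalIdeal (J : Ideal A) [IsLocalRing (A ⧸ J)]
    (Q : Ideal (A ⧸ J)) :
    quotLength (Q.comap (Ideal.Quotient.mk J))
        ((Q.comap (Ideal.Quotient.mk J)).colon (maximalIdeal A)) =
      quotLength Q (Q.colon (maximalIdeal (A ⧸ J))) := by
  have hJQ : J ≤ Q.comap (Ideal.Quotient.mk J) := mk_ker.symm.trans_le (ker_le_comap _)
  rw [← quotLength_map_quotientMk_of_le hJQ, map_comap_of_surjective _ Quotient.mk_surjective,
    ← maximalIdeal_comap_quotientMk J, ← comap_colon_of_surjective Quotient.mk_surjective,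
    map_comap_of_surjective _ Quotient.mk_surjective]

theorem IsParameterIdeal.comap_quotientMk {a : A} [IsLocalRing (A ⧸ span {a})]
    (hdim : ringKrullDim A = ringKrullDim (A ⧸ span {a}) + 1) {Q : Ideal (A ⧸ span {a})}
    (hQ : IsParameterIdeal (A ⧸ span {a}) Q) :
    IsParameterIdeal A (Q.comap (Ideal.Quotient.mk _)) := by
  obtain ⟨n, x, ⟨hdimQ, hrad⟩, rfl⟩ := hQ
  set y := Function.surjInv Quotient.mk_surjective ∘ x
  have hxy : Set.range x = Ideal.Quotient.mk _ '' Set.range y := by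
    rw [← Set.range_comp]
    exact congrArg Set.range (funext fun i => (Function.surjInv_eq _ (x i)).symm)
  have hspan :
      (span (Set.range x)).comap (Ideal.Quotient.mk _) = span (Set.range (Fin.cons a y)) := by
    rw [Fin.range_cons, hxy, comap_quotientMk_span_image]
  refine ⟨n + 1, Fin.cons a y, ⟨?_, ?_⟩, hspan⟩
  · rw [hdim, hdimQ]
    norm_cast
  · rw [← hspan, ← comap_radical, hrad, maximalIdeal_comap_quotientMk]

end

theorem stmt11_general {A : Type*} [CommRing A] [IsLocalRing A]
    {d : ℕ} (hd : 2 ≤ d) (hdim : ringKrullDim A = d)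
    (a : A)
    [IsLocalRing (A ⧸ Ideal.span {a})]
    (hdim' : ringKrullDim (A ⧸ Ideal.span {a}) = ((d - 1 : ℕ) : WithBot ℕ∞)) :
    typeR (A ⧸ Ideal.span {a}) ≤ typeR A := by
  have hdim_succ : ringKrullDim A = ringKrullDim (A ⧸ span {a}) + 1 := by
    rw [hdim, hdim']
    norm_cast
    omega
  refine iSup₂_le fun Q hQ => ?_
  rw [← quotLength_comap_quotientMk_colon_maximalIdeal]
  exact le_typeR (hQ.comap_quotientMk hdim_succ)

theorem stmt11 {A : Type*} [CommRing A] [IsLocalRing A] [IsNoetherianRing A]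
    (hB : IsBuchsbaum A) {d : ℕ} (hd : 2 ≤ d) (hdim : ringKrullDim A = d)
    (a : A) (ha : a ∈ maximalIdeal A)
    [IsLocalRing (A ⧸ Ideal.span {a})]
    (hdim' : ringKrullDim (A ⧸ Ideal.span {a}) = ((d - 1 : ℕ) : WithBot ℕ∞)) :
    typeR (A ⧸ Ideal.span {a}) ≤ typeR A :=
  stmt11_general hd hdim a hdim'
end

section
/- Let (A, 𝔪) be a one-dimensional Buchsbaum local ring, let Q = (a) be a parameter ideal, I = Q : 𝔪, and for n ≥ 0 set I_n = I^{n+1} : aⁿ. If e(A) > 1 and I_n = I_{n+1} for some n ≥ 0, then I^{n+2} = Q I^{n+1}. -/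
open Ideal IsLocalRing

/-!
Write `𝔪` for the maximal ideal and `W = 0 :_A 𝔪`; the Buchsbaum property gives `0 :_A a = W`.
The key point is `I𝔪 ⊆ a𝔪`. Otherwise `y m = a s` with `y ∈ I`, `m ∈ 𝔪` and `s` a unit, and then
`𝔪 = (m) + W`. As `W𝔪 = 0` this forces `𝔪ᵏ = (mᵏ)` for `k ≥ 2`, so `ℓ(A/𝔪ᴺ) ≤ N + C` and
`e(A) ≤ 1`. Hence `I^{n+2} ⊆ I^{n+1}𝔪 ⊆ a^{n+1}𝔪`, so every `x ∈ I^{n+2}` is `a^{n+1} z` with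
`z ∈ I^{n+2} : a^{n+1} = I^{n+1} : aⁿ`, that is `x = a (aⁿ z) ∈ Q I^{n+1}`.
-/

theorem moduleLength_eq_length (R M : Type*) [Ring R] [AddCommGroup M] [Module R M] :
    moduleLength R M = Module.length R M := by
  rw [moduleLength, ← Module.coe_length, WithBot.unbotD_coe]

section Length

variable {R M : Type*}

theorem Module.length_quotient_eq_add_of_le [Ring R] [AddCommGroup M] [Module R M]
    {N P : Submodule R M} (h : N ≤ P) :
    Module.length R (M ⧸ N) = Module.length R (P.map N.mkQ) + Module.length R (M ⧸ P) := by
  refine Module.length_eq_add_of_exact (P.map N.mkQ).subtype (Submodule.factor h)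
    (Submodule.subtype_injective _) (Submodule.factor_surjective h) ?_
  rw [LinearMap.exact_iff, Submodule.range_subtype]
  ext x
  obtain ⟨y, rfl⟩ := N.mkQ_surjective x
  rw [LinearMap.mem_ker, Submodule.factor_mk, Submodule.mkQ_apply, Submodule.Quotient.mk_eq_zero,
    ← Submodule.mem_comap, Submodule.comap_map_mkQ, sup_eq_right.mpr h]

variable [CommRing R] [IsLocalRing R] [AddCommGroup M] [Module R M]

theorem IsLocalRing.length_span_singleton_le_one {x : M}
    (hx : ∀ r ∈ maximalIdeal R, r • x = 0) : Module.length R (R ∙ x) ≤ 1 := by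
  rw [← (quotTorsionOfEquivSpanSingleton R M x).length_eq]
  have hle : maximalIdeal R ≤ Ideal.torsionOf R M x := fun r hr =>
    (Ideal.mem_torsionOf_iff x r).mpr (hx r hr)
  have : IsSimpleModule R (R ⧸ maximalIdeal R) :=
    isSimpleModule_iff_isCoatom.mpr (maximalIdeal.isMaximal R).out
  calc Module.length R (R ⧸ Ideal.torsionOf R M x)
      ≤ Module.length R (R ⧸ maximalIdeal R) :=
        Module.length_le_of_surjective (Submodule.factor hle) (Submodule.factor_surjective hle)
    _ = 1 := Module.length_eq_one _ _

theorem IsLocalRing.length_quotient_le_add_one {N P : Submodule R M} (hNP : N ≤ P) {v : M}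
    (hP : P ≤ N ⊔ R ∙ v) (hv : ∀ r ∈ maximalIdeal R, r • v ∈ N) :
    Module.length R (M ⧸ N) ≤ Module.length R (M ⧸ P) + 1 := by
  rw [Module.length_quotient_eq_add_of_le hNP, add_comm]
  gcongr
  have hmap : P.map N.mkQ ≤ R ∙ N.mkQ v := by
    rw [Submodule.map_le_iff_le_comap, ← Set.image_singleton, ← Submodule.map_span,
      Submodule.comap_map_mkQ]
    exact hP
  calc Module.length R (P.map N.mkQ) ≤ Module.length R (R ∙ N.mkQ v) :=
        Module.length_le_of_injective _ (Submodule.inclusion_injective hmap)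
    _ ≤ 1 := length_span_singleton_le_one fun r hr => by
        rw [← map_smul, Submodule.mkQ_apply, Submodule.Quotient.mk_eq_zero]
        exact hv r hr

end Length

section HilbertFunction

variable {A : Type*} [CommRing A] [IsLocalRing A]

theorem IsLocalRing.length_quotient_maximalIdeal_pow_ne_top [IsNoetherianRing A] {n : ℕ}
    (hn : n ≠ 0) : Module.length A (A ⧸ maximalIdeal A ^ n) ≠ ⊤ := by
  have : IsArtinianRing (A ⧸ maximalIdeal A ^ n) :=
    quotient_artinian_of_mem_minimalPrimes_of_isLocalRing _ <| by
      rw [← Ideal.radical_minimalPrimes, Ideal.radical_pow _ hn,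
        (maximalIdeal.isMaximal A).isPrime.radical, Ideal.minimalPrimes_eq_subsingleton_self]
      rfl
  have : IsArtinian A (A ⧸ maximalIdeal A ^ n) :=
    isArtinian_of_surjective_algebraMap (Ideal.Quotient.mk_surjective (I := maximalIdeal A ^ n))
  exact Module.length_ne_top

theorem IsLocalRing.exists_length_quotient_maximalIdeal_pow_le [IsNoetherianRing A] {m : A}
    (hm : m ∈ maximalIdeal A) (hpow : ∀ k, 2 ≤ k → maximalIdeal A ^ k ≤ span {m ^ k}) :
    ∃ C : ℕ, ∀ N, 2 ≤ N → Module.length A (A ⧸ maximalIdeal A ^ N) ≤ (N + C : ℕ) := by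
  obtain ⟨C, hC⟩ := ENat.ne_top_iff_exists.mp
    (length_quotient_maximalIdeal_pow_ne_top (A := A) two_ne_zero)
  refine ⟨C, fun N hN => ?_⟩
  induction N, hN using Nat.le_induction with
  | base => rw [← hC]; exact_mod_cast le_add_self
  | succ N hN ih =>
    calc Module.length A (A ⧸ maximalIdeal A ^ (N + 1))
        ≤ Module.length A (A ⧸ maximalIdeal A ^ N) + 1 :=
          length_quotient_le_add_one (Ideal.pow_le_pow_right N.le_succ) (v := m ^ N)
            ((hpow N hN).trans le_sup_right)
            fun r hr => pow_succ' (maximalIdeal A) N ▸ mul_mem_mul hr (pow_mem_pow hm N)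
      _ ≤ (N + C : ℕ) + 1 := by gcongr
      _ = (N + 1 + C : ℕ) := by push_cast; ring

theorem HasHSMultiplicity.le_one_of_length_le {e C : ℕ} (he : HasHSMultiplicity A e)
    (hdim : ringKrullDim A = 1)
    (hC : ∀ N, 2 ≤ N → Module.length A (A ⧸ maximalIdeal A ^ N) ≤ (N + C : ℕ)) : e ≤ 1 := by
  obtain ⟨d, hd, hlim⟩ := he
  obtain rfl : d = 1 := by rw [hdim] at hd; exact_mod_cast hd.symm
  have hbound : Filter.Tendsto (fun n : ℕ => 1 + (C : ℝ) / n) Filter.atTop (nhds 1) := by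
    simpa using tendsto_const_nhds.add (tendsto_const_div_atTop_nhds_zero_nat (C : ℝ))
  suffices (e : ℝ) ≤ 1 by exact_mod_cast this
  refine le_of_tendsto_of_tendsto hlim hbound ?_
  filter_upwards [Filter.eventually_ge_atTop 2] with n hn
  have hn0 : (0 : ℝ) < n := by positivity
  have hlen : ((Module.length A (A ⧸ maximalIdeal A ^ n)).toNat : ℝ) ≤ n + C := by
    exact_mod_cast ENat.toNat_le_of_le_natCast (hC n hn)
  simp only [Nat.factorial_one, Nat.cast_one, one_mul, pow_one, moduleLength_eq_length]
  rw [div_le_iff₀ hn0, add_mul, div_mul_cancel₀ _ hn0.ne']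
  linarith

end HilbertFunction

section Ideals

theorem Ideal.pow_mul_le_pow_mul {R : Type*} [CommSemiring R] {I J M : Ideal R}
    (h : I * M ≤ J * M) (k : ℕ) : I ^ k * M ≤ J ^ k * M := by
  induction k with
  | zero => rfl
  | succ k ih =>
    calc I ^ (k + 1) * M = I ^ k * (I * M) := by rw [pow_succ, mul_assoc]
      _ ≤ I ^ k * (J * M) := mul_mono_right h
      _ = J * (I ^ k * M) := by ring
      _ ≤ J * (J ^ k * M) := mul_mono_right ih
      _ = J ^ (k + 1) * M := by ring

variable {R : Type*} [CommRing R]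

theorem Ideal.pow_le_span_pow_of_le_span_sup {M W : Ideal R} {m : R} (hm : m ∈ M)
    (hMW : M ≤ span {m} ⊔ W) (hW : W * M = ⊥) : ∀ k, 2 ≤ k → M ^ k ≤ span {m ^ k} := by
  have hmW : ∀ k ≠ 0, span {m ^ k} * W = ⊥ := fun k hk => le_bot_iff.mp <|
    calc span {m ^ k} * W ≤ M * W :=
          mul_mono_left ((span_singleton_le_iff_mem _).mpr (pow_mem_of_mem _ hm k hk.bot_lt))
      _ = ⊥ := by rw [mul_comm, hW]
  intro k hk
  induction k, hk using Nat.le_induction with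
  | base =>
    calc M ^ 2 = M * M := sq M
      _ ≤ (span {m} ⊔ W) * M := mul_mono_left hMW
      _ = span {m} * M := by rw [sup_mul, hW, sup_bot_eq]
      _ ≤ span {m} * (span {m} ⊔ W) := mul_mono_right hMW
      _ = span {m ^ 2} := by
        have hmW1 : span {m} * W = ⊥ := by simpa using hmW 1 one_ne_zero
        rw [mul_sup, hmW1, sup_bot_eq, span_singleton_mul_span_singleton, sq]
  | succ k hk ih =>
    calc M ^ (k + 1) = M ^ k * M := pow_succ M k
      _ ≤ span {m ^ k} * (span {m} ⊔ W) := mul_mono ih hMW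
      _ = span {m ^ (k + 1)} := by
        rw [mul_sup, hmW k (by omega), sup_bot_eq, span_singleton_mul_span_singleton, pow_succ]

theorem Ideal.le_span_sup_colon_of_mul_eq {M : Ideal R} {a y m s : R}
    (hy : y ∈ (span {a}).colon M) (hs : IsUnit s) (h : y * m = a * s) :
    M ≤ span {m} ⊔ (⊥ : Ideal R).colon (span {a}) := by
  intro p hp
  obtain ⟨c, hc⟩ := mem_span_singleton'.mp (Submodule.mem_colon.mp hy p hp)
  obtain ⟨t, ht⟩ := hs.exists_left_inv
  have hker : p - c * t * m ∈ (⊥ : Ideal R).colon (span {a}) := by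
    rw [mem_colon_span_singleton, Submodule.mem_bot]
    rw [smul_eq_mul] at hc
    -- `a = t y m`, so `a p = t m (y p) = t m c a`
    linear_combination (-p * a) * ht - t * p * h - t * m * hc
  exact Submodule.mem_sup.mpr
    ⟨c * t * m, mem_span_singleton'.mpr ⟨c * t, rfl⟩, _, hker, by ring⟩

theorem Ideal.pow_add_two_eq_span_mul_of_colon_eq {I : Ideal R} {a : R} {n : ℕ} (ha : a ∈ I)
    (hle : I ^ (n + 2) ≤ span {a ^ (n + 1)})
    (h : (I ^ (n + 1)).colon (span {a ^ n}) = (I ^ (n + 2)).colon (span {a ^ (n + 1)})) :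
    I ^ (n + 2) = span {a} * I ^ (n + 1) := by
  refine le_antisymm (fun x hx => ?_) ?_
  · obtain ⟨z, rfl⟩ := mem_span_singleton'.mp (hle hx)
    have hz : z ∈ (I ^ (n + 2)).colon (span {a ^ (n + 1)}) := mem_colon_span_singleton.mpr hx
    rw [← h, mem_colon_span_singleton] at hz
    rw [pow_succ' a n, mul_left_comm]
    exact mul_mem_mul (mem_span_singleton_self a) hz
  · calc span {a} * I ^ (n + 1) ≤ I * I ^ (n + 1) :=
          mul_mono_left ((span_singleton_le_iff_mem _).mpr ha)
      _ = I ^ (n + 2) := (pow_succ' I (n + 1)).symm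

end Ideals

section LocalRing

variable {A : Type*} [CommRing A] [IsLocalRing A]

theorem IsBuchsbaum.colon_span_eq_colon_maximalIdeal (hB : IsBuchsbaum A)
    (hdim : ringKrullDim A = 1) {a : A} (ha : (span {a}).radical = maximalIdeal A) :
    (⊥ : Ideal A).colon (span {a}) = (⊥ : Ideal A).colon (maximalIdeal A) := by
  have hsop : IsSOP (fun _ : Fin 1 => a) := ⟨by rw [hdim]; rfl, by rwa [Set.range_const]⟩
  simpa using hB 1 _ hsop 0

theorem IsLocalRing.le_maximalIdeal_of_mul_le_sq [IsNoetherianRing A]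
    (hm : maximalIdeal A ≠ ⊥) {I : Ideal A} (h : I * maximalIdeal A ≤ maximalIdeal A ^ 2) :
    I ≤ maximalIdeal A := by
  refine le_maximalIdeal fun hI => hm ?_
  rw [hI, top_mul, sq, ← smul_eq_mul] at h
  exact Submodule.eq_bot_of_le_smul_of_le_jacobson_bot _ _ (IsNoetherian.noetherian _) h
    (maximalIdeal_le_jacobson ⊥)

theorem HasHSMultiplicity.not_maximalIdeal_le_span_sup_colon [IsNoetherianRing A] {e : ℕ}
    (he : HasHSMultiplicity A e) (he1 : 1 < e) (hdim : ringKrullDim A = 1) {m : A}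
    (hm : m ∈ maximalIdeal A) :
    ¬ maximalIdeal A ≤ span {m} ⊔ (⊥ : Ideal A).colon (maximalIdeal A) := by
  intro hle
  have hW : (⊥ : Ideal A).colon (maximalIdeal A) * maximalIdeal A = ⊥ := by
    rw [Submodule.bot_colon]
    exact Submodule.annihilator_mul _
  obtain ⟨C, hC⟩ :=
    exists_length_quotient_maximalIdeal_pow_le hm (pow_le_span_pow_of_le_span_sup hm hle hW)
  exact (he.le_one_of_length_le hdim hC).not_gt he1

theorem IsBuchsbaum.colon_mul_maximalIdeal_le [IsNoetherianRing A] (hB : IsBuchsbaum A)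
    (hdim : ringKrullDim A = 1) {e : ℕ} (he : HasHSMultiplicity A e) (he1 : 1 < e) {a : A}
    (ha : (span {a}).radical = maximalIdeal A) :
    (span {a}).colon (maximalIdeal A) * maximalIdeal A ≤ span {a} * maximalIdeal A := by
  refine mul_le.mpr fun y hy m hm => ?_
  obtain ⟨s, hs⟩ := mem_span_singleton'.mp (Submodule.mem_colon.mp hy m hm)
  rw [smul_eq_mul, mul_comm s] at hs
  by_cases hsm : s ∈ maximalIdeal A
  · exact hs ▸ mul_mem_mul (mem_span_singleton_self a) hsm
  · refine absurd ?_ (he.not_maximalIdeal_le_span_sup_colon he1 hdim hm)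
    rw [← hB.colon_span_eq_colon_maximalIdeal hdim ha]
    exact le_span_sup_colon_of_mul_eq hy (notMem_maximalIdeal.mp hsm) hs.symm

end LocalRing

theorem stmt14 {A : Type*} [CommRing A] [IsLocalRing A] [IsNoetherianRing A]
    (hB : IsBuchsbaum A) (hdim : ringKrullDim A = 1)
    (he : ∃ e : ℕ, HasHSMultiplicity A e ∧ 1 < e)
    (a : A) (hQ : IsParameterIdeal A (Ideal.span {a}))
    (I : Ideal A) (hI : I = (Ideal.span {a}).colon (maximalIdeal A))
    (n : ℕ)
    (h : (I ^ (n + 1)).colon (Ideal.span {a ^ n}) =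
      (I ^ (n + 2)).colon (Ideal.span {a ^ (n + 1)})) :
    I ^ (n + 2) = Ideal.span {a} * I ^ (n + 1) := by
  obtain ⟨e, he, he1⟩ := he
  have hrad : (span {a}).radical = maximalIdeal A := by
    obtain ⟨d, x, ⟨-, hx⟩, hax⟩ := hQ
    rwa [hax]
  have ha : a ∈ maximalIdeal A := hrad ▸ le_radical (mem_span_singleton_self a)
  have hm : maximalIdeal A ≠ ⊥ := fun h𝔪 => by
    simp [ringKrullDim_eq_zero_of_isField (isField_iff_maximalIdeal_eq.mpr h𝔪)] at hdim
  have hI𝔪 : I * maximalIdeal A ≤ span {a} * maximalIdeal A :=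
    hI ▸ hB.colon_mul_maximalIdeal_le hdim he he1 hrad
  have hIle : I ≤ maximalIdeal A := le_maximalIdeal_of_mul_le_sq hm <| hI𝔪.trans <| by
    rw [sq]; exact mul_mono_left ((span_singleton_le_iff_mem _).mpr ha)
  have haI : a ∈ I :=
    hI ▸ Submodule.mem_colon.mpr fun p _ => (span {a}).mul_mem_right p (mem_span_singleton_self a)
  refine pow_add_two_eq_span_mul_of_colon_eq haI ?_ h
  calc I ^ (n + 2) = I ^ (n + 1) * I := pow_succ I (n + 1)
    _ ≤ I ^ (n + 1) * maximalIdeal A := mul_mono_right hIle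
    _ ≤ span {a} ^ (n + 1) * maximalIdeal A := pow_mul_le_pow_mul hI𝔪 (n + 1)
    _ ≤ span {a ^ (n + 1)} := by rw [span_singleton_pow]; exact Ideal.mul_le_left
end
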